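/- Let (X,d) be a metric space with integer-valued metric satisfying the local rank condition, let S be the family of all d-splits of X (so that d = d₀ + ∑_{S ∈ S} α_S δ_S with d₀ split-prime), choose λ_S ∈ (0, α_S] for every S ∈ S, and set d₁ := d − ∑_{S ∈ S} λ_S δ_S. Then a function f ∈ ℝ^X belongs to Δ(X,d) if and only if there exist f₁ ∈ Δ(X,d₁) and functions f_S ∈ Δ(X,δ_S) for S ∈ S such that for every x ∈ X the sum ∑_{S ∈ S} λ_S f_S(x) converges and f(x) = f₁(x) + ∑_{S ∈ S} λ_S f_S(x). -/
import Mathlib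


open Set Function

noncomputable section

variable {X : Type*}

/-- `d` is a pseudometric on `X`. -/
def IsPseudometric (d : X → X → ℝ) : Prop :=
  (∀ x, d x x = 0) ∧ (∀ x y, d x y = d y x) ∧ ∀ x y z, d x z ≤ d x y + d y z

/-- `d` is a metric on `X`. -/
def IsMetric (d : X → X → ℝ) : Prop :=
  IsPseudometric d ∧ ∀ x y, d x y = 0 → x = y

/-- `d` is integer-valued. -/
def IsIntegerValued (d : X → X → ℝ) : Prop := ∀ x y, ∃ n : ℤ, d x y = (n : ℝ)

/-- The quantity `β^d` associated to the four points `a, a', b, b'`. -/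
def betaIdx (d : X → X → ℝ) (a a' b b' : X) : ℝ :=
  (max (max (d a b + d a' b') (d a' b + d a b')) (d a a' + d b b') - d a a' - d b b') / 2

/-- The isolation index `α^d_{{A,B}}` of the pair `{A,B}`. -/
def isolIdx (d : X → X → ℝ) (A B : Set X) : ℝ :=
  sInf {r : ℝ | ∃ a ∈ A, ∃ a' ∈ A, ∃ b ∈ B, ∃ b' ∈ B, r = betaIdx d a a' b b'}

/-- `{A, B}` is a partial split of `X`. -/
def IsPartialSplit (A B : Set X) : Prop := A.Nonempty ∧ B.Nonempty ∧ Disjoint A B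

/-- `{A, B}` is a split of `X`. -/
def IsSplit (A B : Set X) : Prop := IsPartialSplit A B ∧ A ∪ B = univ

/-- `{A, B}` is a `d`-split of `X`. -/
def IsDSplit (d : X → X → ℝ) (A B : Set X) : Prop := IsSplit A B ∧ 0 < isolIdx d A B

open Classical in
/-- The split pseudometric `δ_S` of the split `{A, Aᶜ}`. -/
def splitDist (A : Set X) (x y : X) : ℝ := if x ∈ A ↔ y ∈ A then 0 else 1

/-- `Δ(X, ρ)`: functions with `f x + f y ≥ ρ x y` for all `x, y`. -/
def DeltaSet (ρ : X → X → ℝ) : Set (X → ℝ) := {f | ∀ x y, ρ x y ≤ f x + f y}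

/-- Isbell's injective hull `E(X, d)`: the extremal functions, i.e. those with
`f x = sup_y (d x y - f y)` for every `x`. -/
def ExtSet (d : X → X → ℝ) : Set (X → ℝ) :=
  {f | ∀ x, IsLUB {r : ℝ | ∃ y, r = d x y - f y} (f x)}

/-- `E'(X, d)`: elements of `Δ(X, d)` such that every point lies in some pair of `A(f)`. -/
def ExtSet' (d : X → X → ℝ) : Set (X → ℝ) :=
  {f | f ∈ DeltaSet d ∧ ∀ x, ∃ y, f x + f y = d x y}

/-- The set `A(f)` of (ordered) pairs where equality holds. -/
def eqSet (d : X → X → ℝ) (f : X → ℝ) : Set (X × X) := {p | f p.1 + f p.2 = d p.1 p.2}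

/-- The direction space of the affine subspace `H(A)`; its dimension is `rank A`. -/
def dirSubmodule (A : Set (X × X)) : Submodule ℝ (X → ℝ) where
  carrier := {h | ∀ p ∈ A, h p.1 + h p.2 = 0}
  add_mem' := by
    intro a b ha hb p hp
    have h1 := ha p hp
    have h2 := hb p hp
    simp only [Pi.add_apply]
    linarith
  zero_mem' := by intro p _; simp
  smul_mem' := by
    intro c a ha p hp
    have h1 := ha p hp
    simp only [Pi.smul_apply, smul_eq_mul]
    linear_combination c * h1

/-- The local rank condition. -/
def LRC (d : X → X → ℝ) : Prop :=
  ∀ f ∈ ExtSet d, ∃ ε : ℝ, 0 < ε ∧ ∃ N : ℕ,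
    ∀ g ∈ ExtSet' d, (∀ x, |f x - g x| < ε) →
      Module.rank ℝ (dirSubmodule (eqSet d g)) ≤ (N : Cardinal)

/-- `d` is totally split-decomposable: `d = ∑_{S a d-split} α_S δ_S`, where each
separating `d`-split `{A, Aᶜ}` is counted once via its part `A` containing `x`. -/
def TSD (d : X → X → ℝ) : Prop :=
  ∀ x y, d x y = ∑ᶠ A ∈ {A : Set X | IsDSplit d A Aᶜ ∧ x ∈ A ∧ y ∉ A}, isolIdx d A Aᶜ

/-- The cell `[f]` of `f ∈ E(X,d)`: all `g ∈ Δ(X,d)` with `A(f) ⊆ A(g)`. -/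
def cellOf (d : X → X → ℝ) (f : X → ℝ) : Set (X → ℝ) :=
  {g | g ∈ DeltaSet d ∧ ∀ x y, f x + f y = d x y → g x + g y = d x y}


lemma quadAbstract {eab ea'b' ea'b eab' eaa' ebb' eaz ea'z ezb ezb' l l' : ℝ}
    (h1 : 2*l ≤ max (eab + ezb') (ezb + eab') - eaz - ebb')
    (h2 : 2*l ≤ max (ea'b + ezb') (ezb + ea'b') - ea'z - ebb')
    (h3 : 2*l' ≤ max (eaz + ea'b) (ea'z + eab) - eaa' - ezb)
    (h4 : 2*l' ≤ max (eaz + ea'b') (ea'z + eab') - eaa' - ezb') :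
    2*l + 2*l' + (eaa' + ebb') ≤ max (eab + ea'b') (ea'b + eab') := by
  have m1 := le_max_left (eab + ea'b') (ea'b + eab')
  have m2 := le_max_right (eab + ea'b') (ea'b + eab')
  rcases max_choice (eab + ezb') (ezb + eab') with hA | hA <;> rw [hA] at h1 <;>
  rcases max_choice (ea'b + ezb') (ezb + ea'b') with hB | hB <;> rw [hB] at h2 <;>
  rcases max_choice (eaz + ea'b) (ea'z + eab) with hC | hC <;> rw [hC] at h3 <;>
  rcases max_choice (eaz + ea'b') (ea'z + eab') with hD | hD <;> rw [hD] at h4 <;>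
  linarith

/-- The reduced quadruple bound for a split. -/
def QBound (e : X → X → ℝ) (C : Set X) (l : ℝ) : Prop :=
  ∀ u u' v v', u ∈ C → u' ∈ C → v ∈ Cᶜ → v' ∈ Cᶜ →
    2*l ≤ max (e u v + e u' v') (e u' v + e u v') - e u u' - e v v'

lemma QBound.compl {e : X → X → ℝ} (esymm : ∀ x y, e x y = e y x) {C : Set X} {l : ℝ}
    (h : QBound e C l) : QBound e Cᶜ l := by
  intro u u' v v' hu hu' hv hv'
  rw [compl_compl] at hv hv'
  have h := h v v' u u' hv hv' hu hu'
  have s1 := esymm v u; have s2 := esymm v' u'; have s3 := esymm v' u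
  have s4 := esymm v u'; have s5 := esymm v v'; have s6 := esymm u u'
  have m1 := le_max_left (e u v + e u' v') (e u' v + e u v')
  have m2 := le_max_right (e u v + e u' v') (e u' v + e u v')
  rcases max_choice (e v u + e v' u') (e v' u + e v u') with hA | hA <;> rw [hA] at h <;> linarith

/-- Bad-case lemma: if `C` and `S` both induce the split `{a,a'} | {b,b'}`, then the β-value
of the quadruple dominates the sum of the two weights. -/
lemma badLemma {e : X → X → ℝ} {C S : Set X} {lC lS : ℝ}
    (hz : ∃ z, z ∈ (C ∩ Sᶜ) ∪ (Cᶜ ∩ S))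
    (hC : QBound e C lC) (hS : QBound e S lS)
    {a a' b b' : X} (haC : a ∈ C) (ha'C : a' ∈ C) (hbC : b ∈ Cᶜ) (hb'C : b' ∈ Cᶜ)
    (haS : a ∈ S) (ha'S : a' ∈ S) (hbS : b ∈ Sᶜ) (hb'S : b' ∈ Sᶜ) :
    2*lC + 2*lS + (e a a' + e b b') ≤ max (e a b + e a' b') (e a' b + e a b') := by
  obtain ⟨z, hz⟩ := hz
  rcases hz with ⟨hzC, hzS⟩ | ⟨hzC, hzS⟩
  · have h1 := hC a z b b' haC hzC hbC hb'C
    have h2 := hC a' z b b' ha'C hzC hbC hb'C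
    have h3 := hS a a' z b haS ha'S hzS hbS
    have h4 := hS a a' z b' haS ha'S hzS hb'S
    have := quadAbstract h1 h2 h3 h4
    linarith
  · have h1 := hS a z b b' haS hzS hbS hb'S
    have h2 := hS a' z b b' ha'S hzS hbS hb'S
    have h3 := hC a a' z b haC ha'C hzC hbC
    have h4 := hC a a' z b' haC ha'C hzC hb'C
    have := quadAbstract h1 h2 h3 h4
    linarith

lemma splitDist_same {C : Set X} {x y : X} (hx : x ∈ C) (hy : y ∈ C) : splitDist C x y = 0 := by
  simp [splitDist, hx, hy]

lemma splitDist_same' {C : Set X} {x y : X} (hx : x ∉ C) (hy : y ∉ C) : splitDist C x y = 0 := by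
  simp [splitDist, hx, hy]

lemma splitDist_diff {C : Set X} {x y : X} (hx : x ∈ C) (hy : y ∉ C) : splitDist C x y = 1 := by
  simp [splitDist, hx, hy]

lemma splitDist_diff' {C : Set X} {x y : X} (hx : x ∉ C) (hy : y ∈ C) : splitDist C x y = 1 := by
  simp [splitDist, hx, hy]

lemma splitDist_self (A : Set X) (x : X) : splitDist A x x = 0 := by
  unfold splitDist; rw [if_pos Iff.rfl]

lemma keyStep {e : X → X → ℝ} (esymm : ∀ x y, e x y = e y x) {C S : Set X} {lC lS : ℝ}
    (hlC : 0 ≤ lC) (hne : C ≠ S) (hne' : Cᶜ ≠ S)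
    (hC : QBound e C lC) (hS : QBound e S lS) :
    QBound (fun x y => e x y - lC * splitDist C x y) S lS := by
  intro a a' b b' haS ha'S hbS hb'S
  have hq := hS a a' b b' haS ha'S hbS hb'S
  rw [le_sub_iff_add_le, le_sub_iff_add_le, le_max_iff] at hq
  by_cases ha : a ∈ C <;> by_cases ha' : a' ∈ C <;> by_cases hb : b ∈ C <;> by_cases hb' : b' ∈ C
  · simp only [splitDist_same ha hb, splitDist_same ha' hb', splitDist_same ha' hb, splitDist_same ha hb', splitDist_same ha ha', splitDist_same hb hb', mul_zero, mul_one, sub_zero]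
    rw [le_sub_iff_add_le, le_sub_iff_add_le, le_max_iff]
    rcases hq with hq | hq
    · left; linarith
    · right; linarith
  · simp only [splitDist_same ha hb, splitDist_diff ha' hb', splitDist_same ha' hb, splitDist_diff ha hb', splitDist_same ha ha', splitDist_diff hb hb', mul_zero, mul_one, sub_zero]
    rw [le_sub_iff_add_le, le_sub_iff_add_le, le_max_iff]
    rcases hq with hq | hq
    · left; linarith
    · right; linarith
  · simp only [splitDist_diff ha hb, splitDist_same ha' hb', splitDist_diff ha' hb, splitDist_same ha hb', splitDist_same ha ha', splitDist_diff' hb hb', mul_zero, mul_one, sub_zero]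
    rw [le_sub_iff_add_le, le_sub_iff_add_le, le_max_iff]
    rcases hq with hq | hq
    · left; linarith
    · right; linarith
  · simp only [splitDist_diff ha hb, splitDist_diff ha' hb', splitDist_diff ha' hb, splitDist_diff ha hb', splitDist_same ha ha', splitDist_same' hb hb', mul_zero, mul_one, sub_zero]
    have hz : ∃ z, z ∈ (C ∩ Sᶜ) ∪ (Cᶜ ∩ S) := by
      by_contra h
      push_neg at h
      apply hne
      ext z
      have := h z
      simp only [Set.mem_union, Set.mem_inter_iff, Set.mem_compl_iff, not_or, not_and,
        not_not] at this
      first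
      | tauto
      | (simp only [Set.mem_compl_iff]; tauto)
    have hbad := badLemma hz hC hS ha ha' (by simpa using hb) (by simpa using hb') haS ha'S hbS hb'S
    rw [le_max_iff] at hbad
    rw [le_sub_iff_add_le, le_sub_iff_add_le, le_max_iff]
    rcases hbad with h | h
    · left; linarith
    · right; linarith
  · simp only [splitDist_same ha hb, splitDist_diff' ha' hb', splitDist_diff' ha' hb, splitDist_same ha hb', splitDist_diff ha ha', splitDist_same hb hb', mul_zero, mul_one, sub_zero]
    rw [le_sub_iff_add_le, le_sub_iff_add_le, le_max_iff]
    rcases hq with hq | hq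
    · left; linarith
    · right; linarith
  · simp only [splitDist_same ha hb, splitDist_same' ha' hb', splitDist_diff' ha' hb, splitDist_diff ha hb', splitDist_diff ha ha', splitDist_diff hb hb', mul_zero, mul_one, sub_zero]
    rw [le_sub_iff_add_le, le_sub_iff_add_le, le_max_iff]
    rcases hq with hq | hq
    · left; linarith
    · right; linarith
  · simp only [splitDist_diff ha hb, splitDist_diff' ha' hb', splitDist_same' ha' hb, splitDist_same ha hb', splitDist_diff ha ha', splitDist_diff' hb hb', mul_zero, mul_one, sub_zero]
    rw [le_sub_iff_add_le, le_sub_iff_add_le, le_max_iff]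
    rcases hq with hq | hq
    · left; linarith
    · right; linarith
  · simp only [splitDist_diff ha hb, splitDist_same' ha' hb', splitDist_same' ha' hb, splitDist_diff ha hb', splitDist_diff ha ha', splitDist_same' hb hb', mul_zero, mul_one, sub_zero]
    rw [le_sub_iff_add_le, le_sub_iff_add_le, le_max_iff]
    rcases hq with hq | hq
    · left; linarith
    · right; linarith
  · simp only [splitDist_diff' ha hb, splitDist_same ha' hb', splitDist_same ha' hb, splitDist_diff' ha hb', splitDist_diff' ha ha', splitDist_same hb hb', mul_zero, mul_one, sub_zero]
    rw [le_sub_iff_add_le, le_sub_iff_add_le, le_max_iff]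
    rcases hq with hq | hq
    · left; linarith
    · right; linarith
  · simp only [splitDist_diff' ha hb, splitDist_diff ha' hb', splitDist_same ha' hb, splitDist_same' ha hb', splitDist_diff' ha ha', splitDist_diff hb hb', mul_zero, mul_one, sub_zero]
    rw [le_sub_iff_add_le, le_sub_iff_add_le, le_max_iff]
    rcases hq with hq | hq
    · left; linarith
    · right; linarith
  · simp only [splitDist_same' ha hb, splitDist_same ha' hb', splitDist_diff ha' hb, splitDist_diff' ha hb', splitDist_diff' ha ha', splitDist_diff' hb hb', mul_zero, mul_one, sub_zero]
    rw [le_sub_iff_add_le, le_sub_iff_add_le, le_max_iff]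
    rcases hq with hq | hq
    · left; linarith
    · right; linarith
  · simp only [splitDist_same' ha hb, splitDist_diff ha' hb', splitDist_diff ha' hb, splitDist_same' ha hb', splitDist_diff' ha ha', splitDist_same' hb hb', mul_zero, mul_one, sub_zero]
    rw [le_sub_iff_add_le, le_sub_iff_add_le, le_max_iff]
    rcases hq with hq | hq
    · left; linarith
    · right; linarith
  · simp only [splitDist_diff' ha hb, splitDist_diff' ha' hb', splitDist_diff' ha' hb, splitDist_diff' ha hb', splitDist_same' ha ha', splitDist_same hb hb', mul_zero, mul_one, sub_zero]
    have hz : ∃ z, z ∈ (Cᶜ ∩ Sᶜ) ∪ (Cᶜᶜ ∩ S) := by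
      by_contra h
      push_neg at h
      apply hne'
      ext z
      have := h z
      simp only [Set.mem_union, Set.mem_inter_iff, Set.mem_compl_iff, compl_compl, not_or,
        not_and, not_not] at this
      first
      | tauto
      | (simp only [Set.mem_compl_iff]; tauto)
    have hbad := badLemma hz (hC.compl esymm) hS (by simpa using ha) (by simpa using ha')
      (by simpa using hb) (by simpa using hb') haS ha'S hbS hb'S
    rw [le_max_iff] at hbad
    rw [le_sub_iff_add_le, le_sub_iff_add_le, le_max_iff]
    rcases hbad with h | h
    · left; linarith
    · right; linarith
  · simp only [splitDist_diff' ha hb, splitDist_same' ha' hb', splitDist_diff' ha' hb, splitDist_same' ha hb', splitDist_same' ha ha', splitDist_diff hb hb', mul_zero, mul_one, sub_zero]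
    rw [le_sub_iff_add_le, le_sub_iff_add_le, le_max_iff]
    rcases hq with hq | hq
    · left; linarith
    · right; linarith
  · simp only [splitDist_same' ha hb, splitDist_diff' ha' hb', splitDist_same' ha' hb, splitDist_diff' ha hb', splitDist_same' ha ha', splitDist_diff' hb hb', mul_zero, mul_one, sub_zero]
    rw [le_sub_iff_add_le, le_sub_iff_add_le, le_max_iff]
    rcases hq with hq | hq
    · left; linarith
    · right; linarith
  · simp only [splitDist_same' ha hb, splitDist_same' ha' hb', splitDist_same' ha' hb, splitDist_same' ha hb', splitDist_same' ha ha', splitDist_same' hb hb', mul_zero, mul_one, sub_zero]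
    rw [le_sub_iff_add_le, le_sub_iff_add_le, le_max_iff]
    rcases hq with hq | hq
    · left; linarith
    · right; linarith

lemma betaIdx_nonneg (d : X → X → ℝ) (a a' b b' : X) : 0 ≤ betaIdx d a a' b b' := by
  have := le_max_right (max (d a b + d a' b') (d a' b + d a b')) (d a a' + d b b')
  unfold betaIdx
  linarith

lemma isolIdx_le_betaIdx {d : X → X → ℝ} {A B : Set X} {a a' b b' : X}
    (ha : a ∈ A) (ha' : a' ∈ A) (hb : b ∈ B) (hb' : b' ∈ B) :
    isolIdx d A B ≤ betaIdx d a a' b b' := by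
  apply csInf_le
  · exact ⟨0, by rintro r ⟨u, _, u', _, v, _, v', _, rfl⟩; exact betaIdx_nonneg d u u' v v'⟩
  · exact ⟨a, ha, a', ha', b, hb, b', hb', rfl⟩

lemma qbound_of_isolIdx {e : X → X → ℝ} {A : Set X} {l : ℝ}
    (hl0 : 0 < l) (hl : l ≤ isolIdx e A Aᶜ) : QBound e A l := by
  intro u u' v v' hu hu' hv hv'
  have h := (hl.trans (isolIdx_le_betaIdx hu hu' hv hv'))
  unfold betaIdx at h
  rcases max_choice (max (e u v + e u' v') (e u' v + e u v')) (e u u' + e v v') with hM | hM <;>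
    rw [hM] at h
  · linarith
  · linarith

lemma splitDist_symm (A : Set X) (x y : X) : splitDist A x y = splitDist A y x := by
  unfold splitDist
  by_cases h : x ∈ A ↔ y ∈ A
  · rw [if_pos h, if_pos h.symm]
  · rw [if_neg h, if_neg (fun h' => h h'.symm)]

section Main

variable (d : X → X → ℝ) (𝒯 : Set (Set X)) (lam : Set X → ℝ)

lemma keyFinite (hdsymm : ∀ x y, d x y = d y x)
    (h𝒯₁ : ∀ A ∈ 𝒯, IsDSplit d A Aᶜ)
    (h𝒯₂ : ∀ A : Set X, IsDSplit d A Aᶜ → (A ∈ 𝒯 ↔ Aᶜ ∉ 𝒯))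
    (hlam : ∀ A ∈ 𝒯, 0 < lam A ∧ lam A ≤ isolIdx d A Aᶜ) :
    ∀ W : Finset (Set X), ↑W ⊆ 𝒯 → ∀ S, S ∈ 𝒯 → S ∉ W →
      QBound (fun x y => d x y - ∑ A ∈ W, lam A * splitDist A x y) S (lam S) := by
  classical
  intro W
  induction W using Finset.induction_on with
  | empty =>
    intro _ S hS _
    simpa using qbound_of_isolIdx (hlam S hS).1 (hlam S hS).2
  | @insert C W₀ hCW₀ hIH =>
    intro hsub S hS hSW
    have hC𝒯 : C ∈ 𝒯 := hsub (Finset.mem_insert_self C W₀)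
    have hW₀ : ↑W₀ ⊆ 𝒯 := fun A hA => hsub (Finset.mem_insert_of_mem hA)
    have hSW₀ : S ∉ W₀ := fun h => hSW (Finset.mem_insert_of_mem h)
    have hne : C ≠ S := fun h => hSW (h ▸ Finset.mem_insert_self C W₀)
    have hne' : Cᶜ ≠ S := by
      intro h
      have : Cᶜ ∉ 𝒯 := (h𝒯₂ C (h𝒯₁ C hC𝒯)).mp hC𝒯
      exact this (h ▸ hS)
    have e₀symm : ∀ x y, (fun x y => d x y - ∑ A ∈ W₀, lam A * splitDist A x y) x y
        = (fun x y => d x y - ∑ A ∈ W₀, lam A * splitDist A x y) y x := by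
      intro x y
      simp only [hdsymm x y]
      congr 1
      exact Finset.sum_congr rfl fun A _ => by rw [splitDist_symm]
    have hstep := keyStep e₀symm (le_of_lt (hlam C hC𝒯).1) hne hne'
      (hIH hW₀ C hC𝒯 hCW₀) (hIH hW₀ S hS hSW₀)
    have heq : (fun x y => (fun x y => d x y - ∑ A ∈ W₀, lam A * splitDist A x y) x y
          - lam C * splitDist C x y)
        = (fun x y => d x y - ∑ A ∈ Insert.insert C W₀, lam A * splitDist A x y) := by
      funext x y
      simp only [Finset.sum_insert hCW₀]
      ring
    rw [heq] at hstep
    exact hstep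

lemma keyLimit (hdsymm : ∀ x y, d x y = d y x)
    (h𝒯₁ : ∀ A ∈ 𝒯, IsDSplit d A Aᶜ)
    (h𝒯₂ : ∀ A : Set X, IsDSplit d A Aᶜ → (A ∈ 𝒯 ↔ Aᶜ ∉ 𝒯))
    (hlam : ∀ A ∈ 𝒯, 0 < lam A ∧ lam A ≤ isolIdx d A Aᶜ)
    (U : Set (Set X)) (hU : U ⊆ 𝒯) (S : Set X) (hS : S ∈ 𝒯) (hSU : S ∉ U)
    (hsum : ∀ x y, Summable (fun A : ↥U => lam ↑A * splitDist (↑A : Set X) x y)) :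
    QBound (fun x y => d x y - ∑' (A : ↥U), lam ↑A * splitDist (↑A : Set X) x y) S (lam S) := by
  classical
  intro u u' v v' hu hu' hv hv'
  -- partial sums tend to the tsum
  have htend : ∀ x y : X, Filter.Tendsto
      (fun W : Finset ↥U => d x y - ∑ A ∈ W, lam ↑A * splitDist (↑A : Set X) x y)
      Filter.atTop (nhds (d x y - ∑' (A : ↥U), lam ↑A * splitDist (↑A : Set X) x y)) := by
    intro x y
    exact Filter.Tendsto.const_sub _ (hsum x y).hasSum
  have hbound : ∀ W : Finset ↥U,
      2 * lam S ≤ max ((d u v - ∑ A ∈ W, lam ↑A * splitDist (↑A : Set X) u v)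
          + (d u' v' - ∑ A ∈ W, lam ↑A * splitDist (↑A : Set X) u' v'))
        ((d u' v - ∑ A ∈ W, lam ↑A * splitDist (↑A : Set X) u' v)
          + (d u v' - ∑ A ∈ W, lam ↑A * splitDist (↑A : Set X) u v'))
        - (d u u' - ∑ A ∈ W, lam ↑A * splitDist (↑A : Set X) u u')
        - (d v v' - ∑ A ∈ W, lam ↑A * splitDist (↑A : Set X) v v') := by
    intro W
    have hinj : Function.Injective (Subtype.val : ↥U → Set X) := Subtype.val_injective
    have hWim : ↑(W.image Subtype.val) ⊆ 𝒯 := by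
      intro A hA
      simp only [Finset.coe_image, Set.mem_image] at hA
      obtain ⟨p, _, rfl⟩ := hA
      exact hU p.2
    have hSim : S ∉ W.image Subtype.val := by
      intro h
      simp only [Finset.mem_image] at h
      obtain ⟨p, _, hp⟩ := h
      exact hSU (hp ▸ p.2)
    have hkf := keyFinite d 𝒯 lam hdsymm h𝒯₁ h𝒯₂ hlam (W.image Subtype.val) hWim S hS hSim
      u u' v v' hu hu' hv hv'
    have hsumeq : ∀ x y : X, ∑ A ∈ W.image Subtype.val, lam A * splitDist A x y
        = ∑ A ∈ W, lam ↑A * splitDist (↑A : Set X) x y := by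
      intro x y
      rw [Finset.sum_image (fun p _ q _ h => hinj h)]
    simp only [hsumeq] at hkf
    exact hkf
  have htendmax : Filter.Tendsto
      (fun W : Finset ↥U => max ((d u v - ∑ A ∈ W, lam ↑A * splitDist (↑A : Set X) u v)
          + (d u' v' - ∑ A ∈ W, lam ↑A * splitDist (↑A : Set X) u' v'))
        ((d u' v - ∑ A ∈ W, lam ↑A * splitDist (↑A : Set X) u' v)
          + (d u v' - ∑ A ∈ W, lam ↑A * splitDist (↑A : Set X) u v'))
        - (d u u' - ∑ A ∈ W, lam ↑A * splitDist (↑A : Set X) u u')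
        - (d v v' - ∑ A ∈ W, lam ↑A * splitDist (↑A : Set X) v v'))
      Filter.atTop (nhds (max ((d u v - ∑' (A : ↥U), lam ↑A * splitDist (↑A : Set X) u v)
          + (d u' v' - ∑' (A : ↥U), lam ↑A * splitDist (↑A : Set X) u' v'))
        ((d u' v - ∑' (A : ↥U), lam ↑A * splitDist (↑A : Set X) u' v)
          + (d u v' - ∑' (A : ↥U), lam ↑A * splitDist (↑A : Set X) u v'))
        - (d u u' - ∑' (A : ↥U), lam ↑A * splitDist (↑A : Set X) u u')
        - (d v v' - ∑' (A : ↥U), lam ↑A * splitDist (↑A : Set X) v v'))) := by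
    exact (((htend u v).add (htend u' v')).max ((htend u' v).add (htend u v'))).sub
      (htend u u') |>.sub (htend v v')
  exact ge_of_tendsto' htendmax hbound

end Main

open Classical in
/-- The canonical two-valued element of `Δ(X, δ_A)` with parameter `r`. -/
def rho (A : Set X) (r : ℝ) (x : X) : ℝ := if x ∈ A then r else 1 - r

lemma rho_nonneg {A : Set X} {r : ℝ} (h0 : 0 ≤ r) (h1 : r ≤ 1) (x : X) : 0 ≤ rho A r x := by
  unfold rho; split <;> linarith

lemma rho_delta {A : Set X} {r : ℝ} (h0 : 0 ≤ r) (h1 : r ≤ 1) (x y : X) :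
    splitDist A x y ≤ rho A r x + rho A r y := by
  by_cases hx : x ∈ A <;> by_cases hy : y ∈ A
  · rw [splitDist_same hx hy]; unfold rho; rw [if_pos hx, if_pos hy]; linarith
  · rw [splitDist_diff hx hy]; unfold rho; rw [if_pos hx, if_neg hy]; linarith
  · rw [splitDist_diff' hx hy]; unfold rho; rw [if_neg hx, if_pos hy]; linarith
  · rw [splitDist_same' hx hy]; unfold rho; rw [if_neg hx, if_neg hy]; linarith

lemma extendOne {e : X → X → ℝ} {g : X → ℝ} {S : Set X} {l : ℝ}
    (hl : 0 < l) (hSne : S.Nonempty) (hScne : Sᶜ.Nonempty)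
    (hg : ∀ x y, e x y ≤ g x + g y) (hQ : QBound e S l) :
    ∃ s : ℝ, 0 ≤ s ∧ s ≤ 1 ∧
      ∀ x y, l * (rho S s x + rho S s y - splitDist S x y) ≤ g x + g y - e x y := by
  classical
  set setA := {r : ℝ | ∃ u ∈ S, ∃ v ∈ S, r = g u + g v - e u v} with hsetA
  set setB := {r : ℝ | ∃ u ∈ Sᶜ, ∃ v ∈ Sᶜ, r = g u + g v - e u v} with hsetB
  obtain ⟨a₀, ha₀⟩ := hSne
  obtain ⟨b₀, hb₀⟩ := hScne
  have hAne : setA.Nonempty := ⟨g a₀ + g a₀ - e a₀ a₀, a₀, ha₀, a₀, ha₀, rfl⟩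
  have hBne : setB.Nonempty := ⟨g b₀ + g b₀ - e b₀ b₀, b₀, hb₀, b₀, hb₀, rfl⟩
  have hbddA : BddBelow setA := ⟨0, by rintro r ⟨u, _, v, _, rfl⟩; linarith [hg u v]⟩
  have hbddB : BddBelow setB := ⟨0, by rintro r ⟨u, _, v, _, rfl⟩; linarith [hg u v]⟩
  set SA := sInf setA
  set SB := sInf setB
  have hSA0 : 0 ≤ SA := le_csInf hAne (by rintro r ⟨u, _, v, _, rfl⟩; linarith [hg u v])
  have hSB0 : 0 ≤ SB := le_csInf hBne (by rintro r ⟨u, _, v, _, rfl⟩; linarith [hg u v])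
  have hpair : ∀ r ∈ setA, ∀ r' ∈ setB, 2 * l ≤ r + r' := by
    rintro r ⟨u, hu, v, hv, rfl⟩ r' ⟨w, hw, w', hw', rfl⟩
    have hq := hQ u v w w' hu hv hw hw'
    have g1 := hg u w
    have g2 := hg v w'
    have g3 := hg v w
    have g4 := hg u w'
    rcases max_choice (e u w + e v w') (e v w + e u w') with hM | hM <;> rw [hM] at hq <;> linarith
  have hkey : 2 * l ≤ SA + SB := by
    have h1 : ∀ r' ∈ setB, 2 * l - r' ≤ SA := fun r' hr' =>
      le_csInf hAne fun r hr => by linarith [hpair r hr r' hr']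
    have h2 : 2 * l - SA ≤ SB := le_csInf hBne fun r' hr' => by linarith [h1 r' hr']
    linarith
  refine ⟨min 1 (SA / (2 * l)), le_min zero_le_one (div_nonneg hSA0 (by linarith)), min_le_left _ _, ?_⟩
  intro x y
  set s := min 1 (SA / (2 * l)) with hs
  have hs1 : s ≤ 1 := min_le_left _ _
  have hs0 : 0 ≤ s := le_min zero_le_one (div_nonneg hSA0 (by linarith))
  have h2ls : 2 * l * s ≤ SA := by
    have : s ≤ SA / (2 * l) := min_le_right _ _
    calc 2 * l * s ≤ 2 * l * (SA / (2 * l)) := by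
          apply mul_le_mul_of_nonneg_left this (by linarith)
      _ = SA := by field_simp
  have h2ls' : 2 * l * (1 - s) ≤ SB := by
    rcases min_choice 1 (SA / (2 * l)) with hm | hm
    · rw [← hs] at hm; rw [hm]; simpa using hSB0
    · rw [← hs] at hm
      have : 2 * l * s = SA := by rw [hm]; field_simp
      linarith
  by_cases hx : x ∈ S <;> by_cases hy : y ∈ S
  · have hmem : g x + g y - e x y ∈ setA := ⟨x, hx, y, hy, rfl⟩
    have := csInf_le hbddA hmem
    simp only [rho, if_pos hx, if_pos hy, splitDist_same hx hy]
    nlinarith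
  · have := hg x y
    simp only [rho, if_pos hx, if_neg hy, splitDist_diff hx hy]
    nlinarith
  · have := hg x y
    simp only [rho, if_neg hx, if_pos hy, splitDist_diff' hx hy]
    nlinarith
  · have hmem : g x + g y - e x y ∈ setB := ⟨x, hx, y, hy, rfl⟩
    have := csInf_le hbddB hmem
    simp only [rho, if_neg hx, if_neg hy, splitDist_same' hx hy]
    nlinarith

/-- A partial assignment of parameters to splits, compatible with the slack of `f`. -/
def GoodSet (d : X → X → ℝ) (𝒯 : Set (Set X)) (lam : Set X → ℝ) (f : X → ℝ)
    (G : Set (Set X × ℝ)) : Prop :=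
  (∀ p ∈ G, p.1 ∈ 𝒯 ∧ 0 ≤ p.2 ∧ p.2 ≤ 1) ∧
  (∀ p ∈ G, ∀ q ∈ G, p.1 = q.1 → p = q) ∧
  ∀ x y : X, ∀ W : Finset (Set X × ℝ), ↑W ⊆ G →
    ∑ p ∈ W, lam p.1 * (rho p.1 p.2 x + rho p.1 p.2 y - splitDist p.1 x y)
      ≤ f x + f y - d x y

lemma good_zorn (d : X → X → ℝ) (𝒯 : Set (Set X)) (lam : Set X → ℝ) (f : X → ℝ)
    (hf : f ∈ DeltaSet d) :
    ∃ G, GoodSet d 𝒯 lam f G ∧ ∀ G', GoodSet d 𝒯 lam f G' → G ⊆ G' → G' = G := by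
  classical
  have hchainub : ∀ c ⊆ {G | GoodSet d 𝒯 lam f G}, IsChain (· ⊆ ·) c →
      ∃ ub ∈ {G | GoodSet d 𝒯 lam f G}, ∀ s ∈ c, s ⊆ ub := by
    intro c hc hchain
    refine ⟨⋃₀ c, ⟨?_, ?_, ?_⟩, fun s hs => Set.subset_sUnion_of_mem hs⟩
    · rintro p ⟨t, ht, hp⟩
      exact (hc ht).1 p hp
    · rintro p ⟨t, ht, hp⟩ q ⟨t', ht', hq⟩ hpq
      rcases hchain.total ht ht' with h | h
      · exact (hc ht').2.1 p (h hp) q hq hpq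
      · exact (hc ht).2.1 p hp q (h hq) hpq
    · intro x y W hW
      have : W = ∅ ∨ ∃ t ∈ c, ↑W ⊆ t := by
        induction W using Finset.induction_on with
        | empty => exact Or.inl rfl
        | @insert p W₀ hpW₀ hIH =>
          have hp : p ∈ ⋃₀ c := hW (by simp)
          obtain ⟨t, ht, hpt⟩ := hp
          have hW₀ : ↑W₀ ⊆ ⋃₀ c := by
            refine Set.Subset.trans ?_ hW
            simp only [Finset.coe_insert]
            exact Set.subset_insert _ _
          rcases hIH hW₀ with h | ⟨t', ht', hsub⟩
          · subst h
            exact Or.inr ⟨t, ht, by simpa using hpt⟩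
          · rcases hchain.total ht ht' with h | h
            · refine Or.inr ⟨t', ht', ?_⟩
              simp only [Finset.coe_insert, Set.insert_subset_iff]
              exact ⟨h hpt, hsub⟩
            · refine Or.inr ⟨t, ht, ?_⟩
              simp only [Finset.coe_insert, Set.insert_subset_iff]
              exact ⟨hpt, hsub.trans h⟩
      rcases this with h | ⟨t, ht, hsub⟩
      · subst h
        simpa using hf x y
      · exact (hc ht).2.2 x y W hsub
  obtain ⟨G, hG⟩ := zorn_subset {G | GoodSet d 𝒯 lam f G} hchainub
  exact ⟨G, hG.prop, fun G' hG' hsub => hG.eq_of_ge hG' hsub⟩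

lemma good_finsetsum_le {d : X → X → ℝ} {𝒯 : Set (Set X)} {lam : Set X → ℝ} {f : X → ℝ}
    {G : Set (Set X × ℝ)} (hG : GoodSet d 𝒯 lam f G) (x y : X) (V : Finset ↥G) :
    ∑ p ∈ V, lam p.1.1 * (rho p.1.1 p.1.2 x + rho p.1.1 p.1.2 y - splitDist p.1.1 x y)
      ≤ f x + f y - d x y := by
  classical
  have := hG.2.2 x y (V.map ⟨Subtype.val, Subtype.val_injective⟩)
    (by intro p hp; simp only [Finset.coe_map, Set.mem_image, Finset.mem_coe] at hp
        obtain ⟨q, _, rfl⟩ := hp; exact q.2)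
  rwa [Finset.sum_map] at this

set_option maxHeartbeats 1000000 in
lemma forward (d : X → X → ℝ) (hmet : IsMetric d)
    (𝒯 : Set (Set X))
    (h𝒯₁ : ∀ A ∈ 𝒯, IsDSplit d A Aᶜ)
    (h𝒯₂ : ∀ A : Set X, IsDSplit d A Aᶜ → (A ∈ 𝒯 ↔ Aᶜ ∉ 𝒯))
    (lam : Set X → ℝ)
    (hlam : ∀ A ∈ 𝒯, 0 < lam A ∧ lam A ≤ isolIdx d A Aᶜ)
    (d₁ : X → X → ℝ)
    (hd₁ : ∀ x y : X,
      HasSum (fun A : ↥𝒯 => lam ↑A * splitDist (↑A : Set X) x y) (d x y - d₁ x y))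
    (f : X → ℝ) (hf : f ∈ DeltaSet d) :
    ∃ f₁ ∈ DeltaSet d₁, ∃ F : Set X → X → ℝ,
      (∀ A ∈ 𝒯, F A ∈ DeltaSet (splitDist A)) ∧
      ∀ x, HasSum (fun A : ↥𝒯 => lam ↑A * F (↑A) x) (f x - f₁ x) := by
  classical
  have hdsymm : ∀ x y, d x y = d y x := hmet.1.2.1
  have hd0 : ∀ x, d x x = 0 := hmet.1.1
  obtain ⟨G, hG, hGmax⟩ := good_zorn d 𝒯 lam f hf
  obtain ⟨hG1, hG2, hG3⟩ := hG
  -- summability facts over ↥G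
  have hinj𝒯 : Function.Injective (fun p : ↥G => (⟨p.1.1, (hG1 _ p.2).1⟩ : ↥𝒯)) := by
    intro p q hpq
    exact Subtype.ext (hG2 _ p.2 _ q.2 (congrArg Subtype.val hpq))
  have hsum_del : ∀ x y, Summable (fun p : ↥G => lam p.1.1 * splitDist p.1.1 x y) :=
    fun x y => (hd₁ x y).summable.comp_injective hinj𝒯
  have hlam_nonneg : ∀ p : ↥G, 0 ≤ lam p.1.1 := fun p => le_of_lt (hlam _ (hG1 _ p.2).1).1
  have hterm_nonneg : ∀ (x y : X) (p : ↥G),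
      0 ≤ lam p.1.1 * (rho p.1.1 p.1.2 x + rho p.1.1 p.1.2 y - splitDist p.1.1 x y) := by
    intro x y p
    refine mul_nonneg (hlam_nonneg p) ?_
    have := rho_delta (A := p.1.1) (hG1 _ p.2).2.1 (hG1 _ p.2).2.2 x y
    linarith
  have hGG : GoodSet d 𝒯 lam f G := ⟨hG1, hG2, hG3⟩
  have hsum_term : ∀ x y, Summable (fun p : ↥G =>
      lam p.1.1 * (rho p.1.1 p.1.2 x + rho p.1.1 p.1.2 y - splitDist p.1.1 x y)) :=
    fun x y => summable_of_sum_le (hterm_nonneg x y) (good_finsetsum_le hGG x y)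
  have hsum_rho : ∀ x, Summable (fun p : ↥G => lam p.1.1 * rho p.1.1 p.1.2 x) := by
    intro x
    apply ((hsum_term x x).div_const 2).congr
    intro p
    rw [splitDist_self]
    ring
  have htsum_le : ∀ x y, (∑' p : ↥G,
      lam p.1.1 * (rho p.1.1 p.1.2 x + rho p.1.1 p.1.2 y - splitDist p.1.1 x y))
      ≤ f x + f y - d x y :=
    fun x y => Summable.tsum_le_of_sum_le (hsum_term x y) (good_finsetsum_le hGG x y)
  have htsum_split : ∀ x y, (∑' p : ↥G,
      lam p.1.1 * (rho p.1.1 p.1.2 x + rho p.1.1 p.1.2 y - splitDist p.1.1 x y))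
      = (∑' p : ↥G, lam p.1.1 * rho p.1.1 p.1.2 x)
        + (∑' p : ↥G, lam p.1.1 * rho p.1.1 p.1.2 y)
        - (∑' p : ↥G, lam p.1.1 * splitDist p.1.1 x y) := by
    intro x y
    rw [← Summable.tsum_add (hsum_rho x) (hsum_rho y),
      ← Summable.tsum_sub ((hsum_rho x).add (hsum_rho y)) (hsum_del x y)]
    exact tsum_congr fun p => by ring
  have htotal : ∀ S ∈ 𝒯, ∃ r, (S, r) ∈ G := by
    intro S hS𝒯
    by_contra hSnr
    push_neg at hSnr
    set U : Set (Set X) := {A | ∃ r, (A, r) ∈ G} with hUdef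
    have hU𝒯 : U ⊆ 𝒯 := by rintro A ⟨r, hr⟩; exact (hG1 _ hr).1
    have hSU : S ∉ U := by rintro ⟨r, hr⟩; exact hSnr r hr
    have hGU : ∀ p : ↥G, p.1.1 ∈ U := fun p => ⟨p.1.2, by simpa using p.2⟩
    let eqv : ↥G ≃ ↥U :=
      { toFun := fun p => ⟨p.1.1, hGU p⟩
        invFun := fun A => ⟨(A.1, A.2.choose), A.2.choose_spec⟩
        left_inv := by
          intro p
          exact Subtype.ext (hG2 _ (hGU p).choose_spec _ p.2 rfl)
        right_inv := fun A => Subtype.ext rfl }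
    have hsum_delU : ∀ x y : X, Summable (fun A : ↥U => lam ↑A * splitDist (↑A : Set X) x y) := by
      intro x y
      rw [← Equiv.summable_iff eqv]
      exact hsum_del x y
    have hQ : QBound (fun x y => d x y - ∑' (p : ↥G), lam p.1.1 * splitDist p.1.1 x y)
        S (lam S) := by
      have hk := keyLimit d 𝒯 lam hdsymm h𝒯₁ h𝒯₂ hlam U hU𝒯 S hS𝒯 hSU hsum_delU
      have heq : (fun x y : X => d x y - ∑' (A : ↥U), lam ↑A * splitDist (↑A : Set X) x y)
          = (fun x y : X => d x y - ∑' (p : ↥G), lam p.1.1 * splitDist p.1.1 x y) := by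
        funext x y
        rw [← Equiv.tsum_eq eqv (fun A : ↥U => lam ↑A * splitDist (↑A : Set X) x y)]
        rfl
      rwa [heq] at hk
    have hge : ∀ x y : X, (fun x y => d x y - ∑' (p : ↥G), lam p.1.1 * splitDist p.1.1 x y) x y
        ≤ (fun x => f x - ∑' (p : ↥G), lam p.1.1 * rho p.1.1 p.1.2 x) x
          + (fun x => f x - ∑' (p : ↥G), lam p.1.1 * rho p.1.1 p.1.2 x) y := by
      intro x y
      have h1 := htsum_le x y
      rw [htsum_split x y] at h1
      simp only []
      linarith
    obtain ⟨⟨⟨hSne, hScne, _⟩, _⟩, _⟩ := h𝒯₁ S hS𝒯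
    obtain ⟨s, hs0, hs1, hext⟩ := extendOne (hlam S hS𝒯).1 hSne hScne hge hQ
    have hrs := rho_delta (A := S) hs0 hs1
    have hG' : GoodSet d 𝒯 lam f (insert (S, s) G) := by
      refine ⟨?_, ?_, ?_⟩
      · rintro p (rfl | hp)
        · exact ⟨hS𝒯, hs0, hs1⟩
        · exact hG1 p hp
      · rintro p (rfl | hp) q (rfl | hq) hpq
        · rfl
        · exact absurd (show (S, q.2) ∈ G by
            rwa [show (S, q.2) = q from Prod.ext (by simpa using hpq) rfl]) (hSnr q.2)
        · exact absurd (show (S, p.2) ∈ G by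
            rwa [show (S, p.2) = p from Prod.ext (by simpa using hpq.symm) rfl]) (hSnr p.2)
        · exact hG2 p hp q hq hpq
      · intro x y W hW
        set W₀ := W.erase (S, s) with hW₀def
        have hW₀G : ↑W₀ ⊆ G := by
          intro p hp
          simp only [hW₀def, Finset.coe_erase, Set.mem_diff, Finset.mem_coe,
            Set.mem_singleton_iff] at hp
          rcases hW hp.1 with h | h
          · exact absurd h hp.2
          · exact h
        have hbridge : ∑ p ∈ W₀, lam p.1 * (rho p.1 p.2 x + rho p.1 p.2 y - splitDist p.1 x y)
            ≤ ∑' (p : ↥G),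
              lam p.1.1 * (rho p.1.1 p.1.2 x + rho p.1.1 p.1.2 y - splitDist p.1.1 x y) := by
          rw [← Finset.sum_subtype_of_mem
            (fun p => lam p.1 * (rho p.1 p.2 x + rho p.1 p.2 y - splitDist p.1 x y))
            (fun p hp => hW₀G (Finset.mem_coe.mpr hp))]
          exact Summable.sum_le_tsum _ (fun p _ => hterm_nonneg x y p) (hsum_term x y)
        have hstep : ∑ p ∈ W, lam p.1 * (rho p.1 p.2 x + rho p.1 p.2 y - splitDist p.1 x y)
            ≤ ∑ p ∈ W₀, lam p.1 * (rho p.1 p.2 x + rho p.1 p.2 y - splitDist p.1 x y)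
              + lam S * (rho S s x + rho S s y - splitDist S x y) := by
          by_cases hmem : (S, s) ∈ W
          · rw [hW₀def, ← Finset.sum_erase_add W _ hmem]
          · rw [hW₀def, Finset.erase_eq_of_notMem hmem]
            have h0 : 0 ≤ lam S * (rho S s x + rho S s y - splitDist S x y) :=
              mul_nonneg (hlam S hS𝒯).1.le (by have := hrs x y; linarith)
            linarith
        have hext' := hext x y
        beta_reduce at hext'
        have hsplit := htsum_split x y
        linarith
    have hGeq : insert (S, s) G = G := hGmax _ hG' (Set.subset_insert _ _)
    exact hSnr s (hGeq ▸ Set.mem_insert (S, s) G)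
  -- final assembly
  set t : Set X → ℝ := fun A => if h : ∃ r, (A, r) ∈ G then h.choose else 0 with htdef
  have hmemG : ∀ A, A ∈ 𝒯 → (A, t A) ∈ G := by
    intro A hA
    have h := htotal A hA
    simp only [htdef, dif_pos h]
    exact h.choose_spec
  have hGrepr : ∀ p : ↥G, p.1 = (p.1.1, t p.1.1) :=
    fun p => hG2 p.1 p.2 (p.1.1, t p.1.1) (hmemG p.1.1 (hG1 _ p.2).1) rfl
  let eqv2 : ↥𝒯 ≃ ↥G :=
    { toFun := fun A => ⟨((A : Set X), t ↑A), hmemG ↑A A.2⟩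
      invFun := fun p => ⟨p.1.1, (hG1 _ p.2).1⟩
      left_inv := fun A => Subtype.ext rfl
      right_inv := fun p => Subtype.ext (hGrepr p).symm }
  refine ⟨fun x => f x - ∑' (p : ↥G), lam p.1.1 * rho p.1.1 p.1.2 x, ?_,
    fun A x => rho A (t A) x, ?_, ?_⟩
  · -- f₁ ∈ DeltaSet d₁
    intro x y
    beta_reduce
    have h1 := htsum_le x y
    rw [htsum_split x y] at h1
    have h2 : d x y - d₁ x y = ∑' (p : ↥G), lam p.1.1 * splitDist p.1.1 x y := by
      rw [← (hd₁ x y).tsum_eq,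
        ← Equiv.tsum_eq eqv2 (fun p : ↥G => lam p.1.1 * splitDist p.1.1 x y)]
      exact tsum_congr fun A => rfl
    linarith
  · -- each F A lies in Δ(X, δ_A)
    intro A hA x y
    exact rho_delta (hG1 _ (hmemG A hA)).2.1 (hG1 _ (hmemG A hA)).2.2 x y
  · -- the HasSum decomposition
    intro x
    have hs := (hsum_rho x).hasSum
    rw [← Equiv.hasSum_iff eqv2] at hs
    have heq : f x - (f x - ∑' (p : ↥G), lam p.1.1 * rho p.1.1 p.1.2 x)
        = ∑' (p : ↥G), lam p.1.1 * rho p.1.1 p.1.2 x := by ring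
    rw [heq]
    exact hs

theorem statement10 (d : X → X → ℝ) (hmet : IsMetric d) (hint : IsIntegerValued d)
    (hlrc : LRC d)
    (𝒯 : Set (Set X))
    (h𝒯₁ : ∀ A ∈ 𝒯, IsDSplit d A Aᶜ)
    (h𝒯₂ : ∀ A : Set X, IsDSplit d A Aᶜ → (A ∈ 𝒯 ↔ Aᶜ ∉ 𝒯))
    (lam : Set X → ℝ)
    (hlam : ∀ A ∈ 𝒯, 0 < lam A ∧ lam A ≤ isolIdx d A Aᶜ)
    (d₁ : X → X → ℝ)
    (hd₁ : ∀ x y : X,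
      HasSum (fun A : ↥𝒯 => lam ↑A * splitDist (↑A) x y) (d x y - d₁ x y))
    (f : X → ℝ) :
    f ∈ DeltaSet d ↔
      ∃ f₁ ∈ DeltaSet d₁, ∃ F : Set X → X → ℝ,
        (∀ A ∈ 𝒯, F A ∈ DeltaSet (splitDist A)) ∧
        ∀ x, HasSum (fun A : ↥𝒯 => lam ↑A * F (↑A) x) (f x - f₁ x) := by
  constructor
  · intro hf
    exact forward d hmet 𝒯 h𝒯₁ h𝒯₂ lam hlam d₁ hd₁ f hf
  · rintro ⟨f₁, hf₁, F, hF, hsum⟩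
    intro x y
    have hadd := (hsum x).add (hsum y)
    have hcmp : ∀ A : ↥𝒯, lam ↑A * splitDist (↑A : Set X) x y
        ≤ lam ↑A * F (↑A) x + lam ↑A * F (↑A) y := by
      intro A
      have h1 := hF ↑A A.2 x y
      have h2 := (hlam ↑A A.2).1.le
      calc lam ↑A * splitDist (↑A : Set X) x y ≤ lam ↑A * (F ↑A x + F ↑A y) :=
            mul_le_mul_of_nonneg_left h1 h2
        _ = lam ↑A * F ↑A x + lam ↑A * F ↑A y := by ring
    have hle := hasSum_le hcmp (hd₁ x y) hadd
    have hd := hf₁ x y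
    linarith
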